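/- Let I be a weakly polymatroidal monomial ideal of K[x_1,...,x_n] generated in a single degree. Then the colon ideal (I : x_1) is also weakly polymatroidal and generated in a single degree. -/

import Mathlib

open MvPolynomial

namespace Paper

abbrev R (K : Type) [Field K] (n : ℕ) := MvPolynomial (Fin n) K

noncomputable def mon (K : Type) [Field K] {n : ℕ} (a : Fin n →₀ ℕ) : R K n :=
  monomial a 1

def mdeg {n : ℕ} (a : Fin n →₀ ℕ) : ℕ := a.sum fun _ e => e

def IsSqfree {n : ℕ} (a : Fin n →₀ ℕ) : Prop := ∀ i, a i ≤ 1

variable {K : Type} [Field K] {n : ℕ}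

/-- A monomial ideal: an ideal generated by a set of monomials. -/
def IsMonomialIdeal (I : Ideal (R K n)) : Prop :=
  ∃ S : Set (Fin n →₀ ℕ), I = Ideal.span ((mon K) '' S)

/-- The (exponent vectors of the) minimal monomial generators `G(I)` of a monomial
ideal: monomials in `I` such that no proper divisor lies in `I`. -/
def minGens (I : Ideal (R K n)) : Set (Fin n →₀ ℕ) :=
  { a | mon K a ∈ I ∧ ∀ (b : Fin n →₀ ℕ) (i : Fin n),
      a = b + Finsupp.single i 1 → mon K b ∉ I }

/-- Polymatroidal: a monomial ideal generated in a single degree satisfying the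
exchange property. -/
def IsPolymatroidal (I : Ideal (R K n)) : Prop :=
  IsMonomialIdeal I ∧
  (∃ d, ∀ a ∈ minGens I, mdeg a = d) ∧
  ∀ u ∈ minGens I, ∀ v ∈ minGens I, ∀ i : Fin n, v i < u i →
    ∃ j : Fin n, u j < v j ∧
      ∃ w ∈ minGens I, w + Finsupp.single i 1 = u + Finsupp.single j 1

/-- Matroidal: squarefree polymatroidal. -/
def IsMatroidal (I : Ideal (R K n)) : Prop :=
  IsPolymatroidal I ∧ ∀ a ∈ minGens I, IsSqfree a

/-- Weakly polymatroidal with respect to the variable ordering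
`x_{σ 0} > x_{σ 1} > ... > x_{σ (n-1)}`. -/
def IsWeaklyPolymatroidalWrt (σ : Equiv.Perm (Fin n)) (I : Ideal (R K n)) : Prop :=
  IsMonomialIdeal I ∧
  ∀ u ∈ minGens I, ∀ v ∈ minGens I, ∀ t : Fin n,
    (∀ s, s < t → u (σ s) = v (σ s)) → v (σ t) < u (σ t) →
    ∃ j : Fin n, t < j ∧
      ∃ w : Fin n →₀ ℕ,
        w + Finsupp.single (σ j) 1 = v + Finsupp.single (σ t) 1 ∧ mon K w ∈ I

/-- Weakly polymatroidal with respect to the standard ordering `x_1 > ... > x_n`. -/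
def IsWeaklyPolymatroidal (I : Ideal (R K n)) : Prop :=
  IsWeaklyPolymatroidalWrt (Equiv.refl (Fin n)) I

/-- Vertex splittable monomial ideals (Moradi–Khosh-Ahang). Ideals of
`K[V \ {x}]` are encoded as ideals of `R` whose minimal generators do not
involve the variable `x`. -/
inductive VertexSplittable : Ideal (R K n) → Prop
  | principal (a : Fin n →₀ ℕ) : VertexSplittable (Ideal.span {mon K a})
  | bot : VertexSplittable ⊥
  | top : VertexSplittable ⊤
  | split (x : Fin n) (I₁ I₂ : Ideal (R K n)) :
      VertexSplittable I₁ → VertexSplittable I₂ →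
      (∀ a ∈ minGens I₁, a x = 0) → (∀ a ∈ minGens I₂, a x = 0) →
      I₂ ≤ I₁ →
      minGens (Ideal.span {(X x : R K n)} * I₁ + I₂)
        = minGens (Ideal.span {(X x : R K n)} * I₁) ∪ minGens I₂ →
      minGens (Ideal.span {(X x : R K n)} * I₁) ∩ minGens I₂ = ∅ →
      VertexSplittable (Ideal.span {(X x : R K n)} * I₁ + I₂)

/-- Linear quotients: some ordering of the minimal monomial generators such that
each successive colon ideal is generated by a subset of the variables. -/
def HasLinearQuotients (I : Ideal (R K n)) : Prop :=
  IsMonomialIdeal I ∧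
  ∃ L : List (Fin n →₀ ℕ), L.Nodup ∧ {a | a ∈ L} = minGens I ∧
    ∀ (j : ℕ) (hj : j < L.length), 0 < j →
      ∃ S : Set (Fin n),
        Submodule.colon (Ideal.span ((mon K) '' {a | a ∈ L.take j}))
            (Ideal.span {mon K (L.get ⟨j, hj⟩)})
          = Ideal.span ((fun i => (X i : R K n)) '' S)


/-- A (possibly void) abstract simplicial complex on the vertex set `Fin n`. -/
structure SComplex (n : ℕ) where
  faces : Finset (Finset (Fin n))
  down : ∀ F ∈ faces, ∀ G ⊆ F, G ∈ faces

variable {n : ℕ}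

def SComplex.IsFacet (Δ : SComplex n) (F : Finset (Fin n)) : Prop :=
  F ∈ Δ.faces ∧ ∀ G ∈ Δ.faces, F ⊆ G → G = F

/-- Deletion of a vertex. -/
def SComplex.del (Δ : SComplex n) (x : Fin n) : SComplex n where
  faces := Δ.faces.filter (fun F => x ∉ F)
  down := by
    intro F hF G hG
    simp only [Finset.mem_filter] at *
    exact ⟨Δ.down F hF.1 G hG, fun hx => hF.2 (hG hx)⟩

/-- Link of a vertex. -/
def SComplex.lk (Δ : SComplex n) (x : Fin n) : SComplex n where
  faces := Δ.faces.filter (fun F => x ∉ F ∧ insert x F ∈ Δ.faces)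
  down := by
    intro F hF G hG
    simp only [Finset.mem_filter] at *
    refine ⟨Δ.down F hF.1 G hG, fun hx => hF.2.1 (hG hx), ?_⟩
    exact Δ.down _ hF.2.2 _ (Finset.insert_subset_insert x hG)

/-- Vertex decomposability, defined recursively via shedding vertices. -/
inductive VertexDecomposable : SComplex n → Prop
  | simplex (Δ : SComplex n) (F : Finset (Fin n)) :
      Δ.faces = F.powerset → VertexDecomposable Δ
  | shed (Δ : SComplex n) (x : Fin n) :
      VertexDecomposable (Δ.del x) → VertexDecomposable (Δ.lk x) →
      (∀ F ∈ (Δ.lk x).faces, ¬ (Δ.del x).IsFacet F) →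
      VertexDecomposable Δ

/-- Shellability (non-pure, Björner–Wachs). -/
def SComplex.Shellable (Δ : SComplex n) : Prop :=
  ∃ L : List (Finset (Fin n)), L.Nodup ∧ {F | F ∈ L} = {F | Δ.IsFacet F} ∧
    ∀ (i j : ℕ) (hi : i < L.length) (hj : j < L.length), i < j →
      ∃ x ∈ L.get ⟨j, hj⟩ \ L.get ⟨i, hi⟩,
        ∃ (l : ℕ) (hl : l < j),
          L.get ⟨j, hj⟩ \ L.get ⟨l, Nat.lt_trans hl hj⟩ = {x}

/-- The Alexander dual complex `Δ^∨ = { V \ A : A ∉ Δ }`. -/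
noncomputable def SComplex.dual (Δ : SComplex n) : SComplex n where
  faces := Finset.univ.filter (fun B => Bᶜ ∉ Δ.faces)
  down := by
    classical
    intro F hF G hG
    simp only [Finset.mem_filter, Finset.mem_univ, true_and] at *
    intro hGc
    exact hF (Δ.down _ hGc _ (Finset.compl_subset_compl.2 hG))


/-- The squarefree exponent vector of a set of vertices. -/
noncomputable def sqmon {n : ℕ} (F : Finset (Fin n)) : Fin n →₀ ℕ :=
  ∑ i ∈ F, Finsupp.single i 1

/-- The Stanley–Reisner ideal of `Δ`. -/
noncomputable def srIdeal (K : Type) [Field K] {n : ℕ} (Δ : SComplex n) :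
    Ideal (MvPolynomial (Fin n) K) :=
  Ideal.span ((fun F => mon K (sqmon F)) '' {F | F ∉ Δ.faces})


section CM
variable (A : Type) [CommRing A]

/-- Krull dimension of a module: the dimension of `A / ann M`. -/
noncomputable def moduleDim (M : Type) [AddCommGroup M] [Module A M] : WithBot ℕ∞ :=
  ringKrullDim (A ⧸ Submodule.annihilator (⊤ : Submodule A M))

/-- `rs` is an `M`-regular sequence: each entry is a nonzerodivisor on the quotient
of `M` by the previous entries. -/
def IsRegSeq (M : Type) [AddCommGroup M] [Module A M] (rs : List A) : Prop :=
  ∀ (i : ℕ) (hi : i < rs.length),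
    ∀ m : M ⧸ (Ideal.span {r | r ∈ rs.take i} • (⊤ : Submodule A M)),
      rs.get ⟨i, hi⟩ • m = 0 → m = 0

/-- Depth of `M` with respect to the ideal `J`: the supremum of lengths of
`M`-regular sequences contained in `J`. -/
noncomputable def moduleDepth (J : Ideal A) (M : Type) [AddCommGroup M] [Module A M] : ℕ :=
  sSup {k | ∃ rs : List A, rs.length = k ∧ (∀ r ∈ rs, r ∈ J) ∧ IsRegSeq A M rs}

/-- Cohen–Macaulay module (with respect to the ideal `J` playing the role of the
maximal ideal): zero, or depth equals Krull dimension. -/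
def IsCMmod (J : Ideal A) (M : Type) [AddCommGroup M] [Module A M] : Prop :=
  Subsingleton M ∨ moduleDim A M = ((moduleDepth A J M : ℕ∞) : WithBot ℕ∞)

/-- Sequentially Cohen–Macaulay module: a filtration `0 = M₀ ⊂ ... ⊂ M_r = N` with
Cohen–Macaulay quotients of strictly increasing Krull dimension. -/
def IsSeqCM (J : Ideal A) (N : Type) [AddCommGroup N] [Module A N] : Prop :=
  ∃ (r : ℕ) (c : Fin (r + 1) → Submodule A N),
    c 0 = ⊥ ∧ c (Fin.last r) = ⊤ ∧
    (∀ i : Fin r, c i.castSucc ≤ c i.succ) ∧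
    (∀ i : Fin r,
      IsCMmod A J (↥(c i.succ) ⧸ (Submodule.comap (c i.succ).subtype (c i.castSucc)))) ∧
    (∀ i j : Fin r, i < j →
      moduleDim A (↥(c i.succ) ⧸ (Submodule.comap (c i.succ).subtype (c i.castSucc)))
        < moduleDim A (↥(c j.succ) ⧸ (Submodule.comap (c j.succ).subtype (c j.castSucc))))

end CM

variable {K : Type} [Field K] {n : ℕ}

/-- The irrelevant maximal ideal `(x_1, ..., x_n)`. -/
noncomputable def maxIdeal (K : Type) [Field K] (n : ℕ) : Ideal (MvPolynomial (Fin n) K) :=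
  Ideal.span (Set.range (X : Fin n → MvPolynomial (Fin n) K))

section Res

/-- The differential of a free complex given by a matrix of polynomials. -/
noncomputable def resDiff (β : ℕ → ℕ)
    (Mt : (i : ℕ) → Fin (β (i + 1)) → Fin (β i) → MvPolynomial (Fin n) K) (i : ℕ) :
    (Fin (β (i + 1)) →₀ MvPolynomial (Fin n) K) →ₗ[MvPolynomial (Fin n) K]
      (Fin (β i) →₀ MvPolynomial (Fin n) K) :=
  Finsupp.lsum (MvPolynomial (Fin n) K) fun j =>
    LinearMap.toSpanSingleton (MvPolynomial (Fin n) K) _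
      (∑ k : Fin (β i), Finsupp.single k (Mt i j k))

/-- The augmentation map sending basis elements to the generators `g`. -/
noncomputable def resAug (β₀ : ℕ) (g : Fin β₀ → MvPolynomial (Fin n) K) :
    (Fin β₀ →₀ MvPolynomial (Fin n) K) →ₗ[MvPolynomial (Fin n) K] MvPolynomial (Fin n) K :=
  Finsupp.lsum (MvPolynomial (Fin n) K) fun j =>
    LinearMap.toSpanSingleton (MvPolynomial (Fin n) K) _ (g j)

/-- A graded free resolution of the ideal `I`, recorded by Betti numbers `β`,
degree shifts `dg`, homogeneous generators `g` of `I`, and matrices `Mt` of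
homogeneous entries, which is exact. -/
structure GradedRes (I : Ideal (MvPolynomial (Fin n) K)) where
  β : ℕ → ℕ
  dg : (i : ℕ) → Fin (β i) → ℕ
  g : Fin (β 0) → MvPolynomial (Fin n) K
  hg : ∀ j, (g j).IsHomogeneous (dg 0 j)
  Mt : (i : ℕ) → Fin (β (i + 1)) → Fin (β i) → MvPolynomial (Fin n) K
  hMt : ∀ i j k, Mt i j k = 0 ∨
    (dg i k ≤ dg (i + 1) j ∧ (Mt i j k).IsHomogeneous (dg (i + 1) j - dg i k))
  hrange : LinearMap.range (resAug (β 0) g) = I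
  hexact0 : LinearMap.ker (resAug (β 0) g) = LinearMap.range (resDiff β Mt 0)
  hexact : ∀ i, LinearMap.ker (resDiff β Mt i) = LinearMap.range (resDiff β Mt (i + 1))

/-- Castelnuovo–Mumford regularity, as the infimum over all graded free
resolutions of the maximum of `(shift) - (homological degree)`. -/
noncomputable def reg (I : Ideal (MvPolynomial (Fin n) K)) : ℕ∞ :=
  sInf { r : ℕ∞ | ∃ Res : GradedRes I,
    ∀ (i : ℕ) (j : Fin (Res.β i)), (Res.dg i j : ℕ∞) ≤ r + i }

/-- `I` has a `d`-linear resolution. -/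
def HasLinearRes (I : Ideal (MvPolynomial (Fin n) K)) (d : ℕ) : Prop :=
  ∃ Res : GradedRes I, ∀ (i : ℕ) (j : Fin (Res.β i)), Res.dg i j = d + i

/-- The ideal generated by the degree-`d` elements of `I`. -/
noncomputable def compIdeal (I : Ideal (MvPolynomial (Fin n) K)) (d : ℕ) : Ideal (MvPolynomial (Fin n) K) :=
  Ideal.span { f | f ∈ I ∧ f.IsHomogeneous d }

/-- Componentwise linear ideal. -/
def ComponentwiseLinear (I : Ideal (MvPolynomial (Fin n) K)) : Prop :=
  ∀ d, compIdeal I d = ⊥ ∨ HasLinearRes (compIdeal I d) d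

end Res

/-! If no minimal generator of `I` involves the largest variable `x_1`, then `(I : x_1) = I`.
Otherwise, for `a ∈ G(I : x_1)` any `u ∈ G(I)` dividing `x_1 a` must involve `x_1`: if not,
exchanging a generator that does involve `x_1` against `u` at the first position produces a
divisor `a / x_j` of `a` in `(I : x_1)`. Hence `x_1 a ∈ G(I)`, so every exchange relation in
`(I : x_1)` is an exchange relation in `I` divided by `x_1`, which is legitimate because the
variable `x_j` put in by the exchange is smaller than `x_1`; degrees drop by exactly one. -/

section Monomial

variable {K : Type} [Field K] {n : ℕ}

lemma mon_add (a b : Fin n →₀ ℕ) : mon K (a + b) = mon K a * mon K b := by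
  simp only [mon, monomial_mul, mul_one]

lemma X_eq_mon (i : Fin n) : (X i : R K n) = mon K (Finsupp.single i 1) := rfl

lemma mdeg_add (a b : Fin n →₀ ℕ) : mdeg (a + b) = mdeg a + mdeg b :=
  Finsupp.sum_add_index' (fun _ => rfl) (fun _ _ _ => rfl)

lemma mdeg_single_one (i : Fin n) : mdeg (Finsupp.single i 1) = 1 :=
  Finsupp.sum_single_index rfl

lemma exists_eq_add_single_of_pos {a : Fin n →₀ ℕ} {i : Fin n} (h : 0 < a i) :
    ∃ b, a = b + Finsupp.single i 1 :=
  ⟨a - Finsupp.single i 1, (tsub_add_cancel_of_le (Finsupp.single_le_iff.2 h)).symm⟩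

lemma mon_mem_of_le {I : Ideal (R K n)} {a b : Fin n →₀ ℕ} (ha : mon K a ∈ I)
    (hab : a ≤ b) : mon K b ∈ I := by
  rw [← tsub_add_cancel_of_le hab, mon_add]
  exact I.mul_mem_left _ ha

lemma exists_mem_minGens_le {I : Ideal (R K n)} {a : Fin n →₀ ℕ} (ha : mon K a ∈ I) :
    ∃ u ∈ minGens I, u ≤ a := by
  induction h : mdeg a using Nat.strong_induction_on generalizing a with
  | _ d ih =>
    by_cases hmin : a ∈ minGens I
    · exact ⟨a, hmin, le_rfl⟩
    simp only [minGens, Set.mem_ofPred_eq, not_and, not_forall, not_not] at hmin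
    obtain ⟨b, i, rfl, hb⟩ := hmin ha
    have hdeg : mdeg b < d := by rw [← h, mdeg_add, mdeg_single_one]; omega
    obtain ⟨u, hu, hub⟩ := ih _ hdeg hb rfl
    exact ⟨u, hu, hub.trans le_self_add⟩

lemma eq_of_mem_minGens_of_le {I : Ideal (R K n)} {a b : Fin n →₀ ℕ} (ha : a ∈ minGens I)
    (hb : mon K b ∈ I) (hba : b ≤ a) : b = a := by
  by_contra hne
  obtain ⟨i, hi⟩ : ∃ i, b i < a i := by
    by_contra! h
    exact hne (le_antisymm hba fun i => h i)
  obtain ⟨a', rfl⟩ := exists_eq_add_single_of_pos (lt_of_le_of_lt (Nat.zero_le _) hi)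
  refine ha.2 a' i rfl (mon_mem_of_le hb fun j => ?_)
  have hj := hba j
  rcases eq_or_ne i j with rfl | hij
  · simp only [Finsupp.add_apply, Finsupp.single_eq_same] at hi; omega
  · simpa [Finsupp.single_apply, hij] using hj

lemma IsMonomialIdeal.mem_iff {I : Ideal (R K n)} (hI : IsMonomialIdeal I) (f : R K n) :
    f ∈ I ↔ ∀ m ∈ f.support, mon K m ∈ I := by
  obtain ⟨S, rfl⟩ := hI
  refine ⟨fun hf m hm => ?_, fun h => ?_⟩
  · obtain ⟨s, hs, hsm⟩ := mem_ideal_span_monomial_image.1 hf m hm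
    exact mon_mem_of_le (Ideal.subset_span ⟨s, hs, rfl⟩) hsm
  · refine mem_ideal_span_monomial_image.2 fun m hm => ?_
    exact mem_ideal_span_monomial_image.1 (h m hm) m (by simp [mon])

lemma mem_colon_X_iff {I : Ideal (R K n)} {i : Fin n} {f : R K n} :
    f ∈ Submodule.colon I (Ideal.span {(X i : R K n)}) ↔ X i * f ∈ I := by
  rw [Ideal.mem_colon_span_singleton, mul_comm]

lemma mon_mem_colon_X_iff {I : Ideal (R K n)} {i : Fin n} {a : Fin n →₀ ℕ} :
    mon K a ∈ Submodule.colon I (Ideal.span {(X i : R K n)}) ↔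
      mon K (a + Finsupp.single i 1) ∈ I := by
  rw [mem_colon_X_iff, X_eq_mon, mon_add, mul_comm]

lemma IsMonomialIdeal.colon_X {I : Ideal (R K n)} (hI : IsMonomialIdeal I) (i : Fin n) :
    IsMonomialIdeal (Submodule.colon I (Ideal.span {(X i : R K n)})) := by
  refine ⟨{a | mon K a ∈ Submodule.colon I (Ideal.span {(X i : R K n)})},
    le_antisymm (fun f hf => ?_) ?_⟩
  · refine mem_ideal_span_monomial_image.2 fun m hm => ⟨m, ?_, le_rfl⟩
    rw [Set.mem_ofPred_eq, mon_mem_colon_X_iff]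
    refine (hI.mem_iff _).1 (mem_colon_X_iff.1 hf) _ ?_
    rw [mem_support_iff, ← add_comm, coeff_X_mul]
    exact mem_support_iff.1 hm
  · exact Ideal.span_le.2 fun _ ⟨_, ha, hf⟩ => hf ▸ ha

lemma IsMonomialIdeal.colon_X_eq_self {I : Ideal (R K n)} (hI : IsMonomialIdeal I)
    {i : Fin n} (h : ∀ u ∈ minGens I, u i = 0) :
    Submodule.colon I (Ideal.span {(X i : R K n)}) = I := by
  refine le_antisymm (fun f hf => (hI.mem_iff f).2 fun m hm => ?_) fun f hf =>
    mem_colon_X_iff.2 (I.mul_mem_left _ hf)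
  have hm' := mon_mem_colon_X_iff.1 (((hI.colon_X i).mem_iff f).1 hf m hm)
  obtain ⟨u, hu, hum⟩ := exists_mem_minGens_le hm'
  refine mon_mem_of_le hu.1 fun j => ?_
  have := hum j
  rcases eq_or_ne i j with rfl | hij
  · rw [h u hu]; exact Nat.zero_le _
  · simpa [Finsupp.single_apply, hij] using this

end Monomial

section WeaklyPolymatroidal

variable {K : Type} [Field K] {n : ℕ} {σ : Equiv.Perm (Fin n)} {I : Ideal (R K n)}
  {t₀ : Fin n}

lemma IsWeaklyPolymatroidalWrt.add_single_mem_minGens_of_mem_minGens_colon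
    (hI : IsWeaklyPolymatroidalWrt σ I) (ht₀ : ∀ t, t₀ ≤ t)
    (hpos : ∃ w ∈ minGens I, 0 < w (σ t₀)) {a : Fin n →₀ ℕ}
    (ha : a ∈ minGens (Submodule.colon I (Ideal.span {(X (σ t₀) : R K n)}))) :
    a + Finsupp.single (σ t₀) 1 ∈ minGens I := by
  obtain ⟨u, hu, hua⟩ := exists_mem_minGens_le (mon_mem_colon_X_iff.1 ha.1)
  rcases Nat.eq_zero_or_pos (u (σ t₀)) with huz | huz
  · -- exchange `w` against `u` at `t₀`; then `a / x_{σ j} ∈ (I : x_{σ t₀})`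
    exfalso
    obtain ⟨w, hw, hwz⟩ := hpos
    obtain ⟨j, htj, w', hw', hw'I⟩ := hI.2 w hw u hu t₀
      (fun s hs => absurd hs (not_lt.2 (ht₀ s))) (by rw [huz]; exact hwz)
    have hjz : σ j ≠ σ t₀ := σ.injective.ne (ne_of_gt htj)
    have hua' : u ≤ a := fun i => by
      have := hua i
      rcases eq_or_ne (σ t₀) i with rfl | hzi
      · rw [huz]; exact Nat.zero_le _
      · simpa [Finsupp.single_apply, hzi] using this
    have huj : 0 < u (σ j) := by
      have := DFunLike.congr_fun hw' (σ j)
      simp [hjz] at this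
      omega
    obtain ⟨u', rfl⟩ := exists_eq_add_single_of_pos huj
    obtain ⟨a', rfl⟩ := exists_eq_add_single_of_pos (lt_of_lt_of_le huj (hua' _))
    have hw'eq : w' = u' + Finsupp.single (σ t₀) 1 := by
      apply add_right_cancel (b := Finsupp.single (σ j) 1)
      rw [hw', add_right_comm]
    refine ha.2 a' (σ j) rfl (mon_mem_colon_X_iff.2 (mon_mem_of_le hw'I ?_))
    rw [hw'eq]
    exact add_le_add_left ((add_le_add_iff_right _).1 hua') _
  · obtain ⟨u', rfl⟩ := exists_eq_add_single_of_pos huz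
    have hu'a : u' = a := eq_of_mem_minGens_of_le ha (mon_mem_colon_X_iff.2 hu.1)
      ((add_le_add_iff_right _).1 hua)
    exact hu'a ▸ hu

lemma IsWeaklyPolymatroidalWrt.colon_X_eq_self_or_add_single_mem_minGens
    (hI : IsWeaklyPolymatroidalWrt σ I) (ht₀ : ∀ t, t₀ ≤ t) :
    Submodule.colon I (Ideal.span {(X (σ t₀) : R K n)}) = I ∨
      ∀ a ∈ minGens (Submodule.colon I (Ideal.span {(X (σ t₀) : R K n)})),
        a + Finsupp.single (σ t₀) 1 ∈ minGens I := by
  by_cases hpos : ∃ w ∈ minGens I, 0 < w (σ t₀)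
  · exact Or.inr fun a ha => hI.add_single_mem_minGens_of_mem_minGens_colon ht₀ hpos ha
  · push Not at hpos
    exact Or.inl (hI.1.colon_X_eq_self fun u hu => Nat.eq_zero_of_le_zero (hpos u hu))

lemma IsWeaklyPolymatroidalWrt.colon_X_of_add_single_mem_minGens
    (hI : IsWeaklyPolymatroidalWrt σ I) (ht₀ : ∀ t, t₀ ≤ t)
    (hshift : ∀ a ∈ minGens (Submodule.colon I (Ideal.span {(X (σ t₀) : R K n)})),
      a + Finsupp.single (σ t₀) 1 ∈ minGens I) :
    IsWeaklyPolymatroidalWrt σ (Submodule.colon I (Ideal.span {(X (σ t₀) : R K n)})) := by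
  refine ⟨hI.1.colon_X _, fun u hu v hv t hpre hlt => ?_⟩
  obtain ⟨j, htj, w, hw, hwI⟩ := hI.2 _ (hshift u hu) _ (hshift v hv) t
    (fun s hs => by simp only [Finsupp.add_apply, hpre s hs])
    (by simpa only [Finsupp.add_apply, add_lt_add_iff_right] using hlt)
  have hjz : σ j ≠ σ t₀ := σ.injective.ne (ne_of_gt (lt_of_le_of_lt (ht₀ t) htj))
  have hwz : 0 < w (σ t₀) := by
    have := DFunLike.congr_fun hw (σ t₀)
    simp [Finsupp.single_apply, hjz] at this
    omega
  obtain ⟨w', rfl⟩ := exists_eq_add_single_of_pos hwz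
  refine ⟨j, htj, w', ?_, mon_mem_colon_X_iff.2 hwI⟩
  apply add_right_cancel (b := Finsupp.single (σ t₀) 1)
  rw [add_right_comm, hw, add_right_comm]

end WeaklyPolymatroidal

/-- If `I` is weakly polymatroidal (w.r.t. `x_1 > ... > x_n`) and
generated in a single degree, then `(I : x_1)` is weakly polymatroidal and
generated in a single degree. -/
theorem stmt13 {K : Type} [Field K] {n : ℕ} (hn : 0 < n) (I : Ideal (R K n))
    (h : IsWeaklyPolymatroidal I)
    (hd : ∃ d, ∀ a ∈ minGens I, mdeg a = d) :
    IsWeaklyPolymatroidal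
        (Submodule.colon I (Ideal.span {(X ⟨0, hn⟩ : R K n)})) ∧
      ∃ d, ∀ a ∈ minGens (Submodule.colon I (Ideal.span {(X ⟨0, hn⟩ : R K n)})),
        mdeg a = d := by
  obtain ⟨d, hd⟩ := hd
  have hfirst : ∀ t : Fin n, (⟨0, hn⟩ : Fin n) ≤ t := fun t => Nat.zero_le t
  rcases IsWeaklyPolymatroidalWrt.colon_X_eq_self_or_add_single_mem_minGens h hfirst
    with hJ | hshift
  · simp only [Equiv.refl_apply] at hJ
    rw [hJ]
    exact ⟨h, d, hd⟩
  · refine ⟨h.colon_X_of_add_single_mem_minGens hfirst hshift, d - 1, fun a ha => ?_⟩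
    have := hd _ (hshift a ha)
    rw [mdeg_add, mdeg_single_one] at this
    omega

end Paper
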